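/- arXiv:1906.01585 — 2 statements merged into one kernel-verified Lean document; each statement's English description precedes it below -/
import Mathlib

section
/- Let L = {[p₁,q₁],…,[p_t,q_t]} be a set of closed real intervals with 1 < p_i < q_i for all i ∈ [t], let P_L = ConvexHull(⋃_{i∈[t]} {p_i e_i, q_i e_i}) ⊆ ℝᵗ and φ(L) = max_{i∈[t]} ⌈p_i/(q_i−p_i)⌉. Then for every integer k ≥ φ(L), ConvexHull(kP_L ∪ (k+1)P_L) = kP_L ∪ (k+1)P_L; i.e., the union of two consecutive dilations kP_L ∪ (k+1)P_L is convex. -/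
/-!
For `0 < pᵢ ≤ qᵢ`, `P_L` is the part of the nonnegative orthant where
`∑ xᵢ/qᵢ ≤ 1 ≤ ∑ xᵢ/pᵢ`, so `c • P_L` is the slab `∑ xᵢ/qᵢ ≤ c ≤ ∑ xᵢ/pᵢ`. For `k ≥ φ(L)` we
have `(k+1)pᵢ ≤ kqᵢ`, hence `(k+1) ∑ xᵢ/qᵢ ≤ k ∑ xᵢ/pᵢ` on the orthant. So a point of the convex
slab `∑ xᵢ/qᵢ ≤ k+1, k ≤ ∑ xᵢ/pᵢ` that misses `k • P_L` has `∑ xᵢ/pᵢ ≥ k+1`, i.e. lies in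
`(k+1) • P_L`.
-/

open Pointwise

def PL {t : ℕ} (p q : Fin t → ℝ) : Set (Fin t → ℝ) :=
  convexHull ℝ (⋃ i, {Pi.single i (p i), Pi.single i (q i)})

lemma mem_segment_smul_self {E : Type*} [AddCommGroup E] [Module ℝ E] {a b : ℝ}
    (ha : a ≤ 1) (hb : 1 ≤ b) (x : E) : x ∈ segment ℝ (a • x) (b • x) := by
  have h : (1 : ℝ) ∈ segment ℝ a b := by
    rw [segment_eq_Icc (ha.trans hb)]
    exact ⟨ha, hb⟩
  have := Set.mem_image_of_mem (LinearMap.toSpanSingleton ℝ E x).toAffineMap h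
  rw [image_segment] at this
  simpa using this

namespace IntervalPolytope

variable {ι : Type*} [Fintype ι]

noncomputable def sumDiv (r : ι → ℝ) : (ι → ℝ) →ₗ[ℝ] ℝ where
  toFun x := ∑ i, x i / r i
  map_add' x y := by simp only [Pi.add_apply, add_div, Finset.sum_add_distrib]
  map_smul' c x := by
    simp only [Pi.smul_apply, smul_eq_mul, mul_div_assoc, Finset.mul_sum, RingHom.id_apply]

@[simp]
lemma sumDiv_apply (r x : ι → ℝ) : sumDiv r x = ∑ i, x i / r i := rfl

def slab (p q : ι → ℝ) (a b : ℝ) : Set (ι → ℝ) :=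
  {x | 0 ≤ x ∧ sumDiv q x ≤ a ∧ b ≤ sumDiv p x}

lemma convex_slab (p q : ι → ℝ) (a b : ℝ) : Convex ℝ (slab p q a b) :=
  (convex_Ici 0).inter <|
    (convex_halfSpace_le (sumDiv q).isLinear a).inter (convex_halfSpace_ge (sumDiv p).isLinear b)

lemma smul_slab {c : ℝ} (hc : 0 < c) (p q : ι → ℝ) (a b : ℝ) :
    c • slab p q a b = slab p q (c * a) (c * b) := by
  ext x
  simp only [Set.mem_smul_set_iff_inv_smul_mem₀ hc.ne', slab, Set.mem_ofPred_eq, map_smul,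
    smul_eq_mul, smul_nonneg_iff_nonneg_of_pos_left (inv_pos.2 hc), inv_mul_le_iff₀ hc,
    le_inv_mul_iff₀ hc]

lemma mul_sumDiv_le_mul_sumDiv {p q : ι → ℝ} {a b : ℝ} (hp : ∀ i, 0 < p i) (hq : ∀ i, 0 < q i)
    (h : ∀ i, b * p i ≤ a * q i) {x : ι → ℝ} (hx : 0 ≤ x) :
    b * sumDiv q x ≤ a * sumDiv p x := by
  simp only [sumDiv_apply, Finset.mul_sum]
  refine Finset.sum_le_sum fun i _ => ?_
  rw [mul_div_assoc', mul_div_assoc', div_le_div_iff₀ (hq i) (hp i)]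
  nlinarith [mul_le_mul_of_nonneg_left (h i) (hx i)]

lemma slab_union_slab {p q : ι → ℝ} {a b : ℝ} (ha : 0 < a) (hab : a ≤ b)
    (hp : ∀ i, 0 < p i) (hq : ∀ i, 0 < q i) (h : ∀ i, b * p i ≤ a * q i) :
    slab p q a a ∪ slab p q b b = slab p q b a := by
  ext x
  constructor
  · rintro (⟨hx, hA, hB⟩ | ⟨hx, hA, hB⟩)
    exacts [⟨hx, hA.trans hab, hB⟩, ⟨hx, hA, hab.trans hB⟩]
  · rintro ⟨hx, hA, hB⟩
    by_cases hAa : sumDiv q x ≤ a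
    · exact Or.inl ⟨hx, hAa, hB⟩
    · have := mul_sumDiv_le_mul_sumDiv hp hq h hx
      refine Or.inr ⟨hx, hA, le_of_mul_le_mul_left ?_ ha⟩
      nlinarith

lemma sumDiv_pos_iff {r x : ι → ℝ} (hr : ∀ i, 0 < r i) (hx : 0 ≤ x) :
    0 < sumDiv r x ↔ ∃ i, 0 < x i := by
  rw [sumDiv_apply, Finset.sum_pos_iff_of_nonneg fun i _ => div_nonneg (hx i) (hr i).le]
  simp [div_pos_iff_of_pos_right (hr _)]

variable [DecidableEq ι]

lemma sumDiv_single (r : ι → ℝ) (i : ι) (c : ℝ) : sumDiv r (Pi.single i c) = c / r i := by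
  simp [Pi.single_apply, ite_div]

lemma sum_div_smul_single {r : ι → ℝ} (hr : ∀ i, r i ≠ 0) (x : ι → ℝ) :
    ∑ i, (x i / r i) • Pi.single i (r i) = x := by
  ext j
  simp [Finset.sum_apply, Pi.single_apply, div_mul_cancel₀ _ (hr j)]

lemma inv_sumDiv_smul_mem_convexHull {r : ι → ℝ} (hr : ∀ i, 0 < r i) {x : ι → ℝ} (hx : 0 ≤ x)
    (hpos : 0 < sumDiv r x) :
    (sumDiv r x)⁻¹ • x ∈ convexHull ℝ (Set.range fun i => Pi.single i (r i)) := by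
  have := Finset.centerMass_mem_convexHull Finset.univ (w := fun i => x i / r i)
    (z := fun i => Pi.single i (r i)) (fun i _ => div_nonneg (hx i) (hr i).le) hpos
    (fun i _ => Set.mem_range_self i)
  rwa [Finset.centerMass, sum_div_smul_single fun i => (hr i).ne'] at this

lemma convexHull_eq_slab {p q : ι → ℝ} (hp : ∀ i, 0 < p i) (hpq : ∀ i, p i ≤ q i) :
    convexHull ℝ (⋃ i, {Pi.single i (p i), Pi.single i (q i)}) = slab p q 1 1 := by
  have hq : ∀ i, 0 < q i := fun i => (hp i).trans_le (hpq i)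
  apply subset_antisymm
  · refine convexHull_min ?_ (convex_slab p q 1 1)
    simp only [Set.iUnion_subset_iff, Set.insert_subset_iff, Set.singleton_subset_iff]
    intro i
    refine ⟨⟨Pi.single_nonneg.2 (hp i).le, ?_, ?_⟩, ⟨Pi.single_nonneg.2 (hq i).le, ?_, ?_⟩⟩ <;>
      simp only [sumDiv_single, div_self (hp i).ne', div_self (hq i).ne', le_refl]
    · exact div_le_one_of_le₀ (hpq i) (hq i).le
    · exact (one_le_div (hp i)).2 (hpq i)
  · rintro x ⟨hx, hA, hB⟩
    have hBpos : 0 < sumDiv p x := one_pos.trans_le hB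
    have hApos : 0 < sumDiv q x := (sumDiv_pos_iff hq hx).2 ((sumDiv_pos_iff hp hx).1 hBpos)
    have hull_mem : ∀ r : ι → ℝ, (∀ i, 0 < r i) → (∀ i, r i = p i ∨ r i = q i) →
        0 < sumDiv r x →
        (sumDiv r x)⁻¹ • x ∈ convexHull ℝ (⋃ i, {Pi.single i (p i), Pi.single i (q i)}) := by
      intro r hr hrpq hpos
      refine convexHull_mono ?_ (inv_sumDiv_smul_mem_convexHull hr hx hpos)
      rintro _ ⟨i, rfl⟩
      exact Set.mem_iUnion.2 ⟨i, by rcases hrpq i with h | h <;> simp [h]⟩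
    -- `x` lies between its rescalings onto the hyperplanes through the `p`- and the `q`-vertices.
    refine (convex_convexHull ℝ _).segment_subset (hull_mem p hp (fun _ => .inl rfl) hBpos)
      (hull_mem q hq (fun _ => .inr rfl) hApos) (mem_segment_smul_self ?_ ?_ x)
    · exact inv_le_one_of_one_le₀ hB
    · exact (one_le_inv₀ hApos).2 hA

end IntervalPolytope

lemma succ_mul_le_mul_of_ceil_le {p q : ℝ} (hpq : p < q) {k : ℕ}
    (hk : ⌈p / (q - p)⌉ ≤ (k : ℤ)) : ((k : ℝ) + 1) * p ≤ k * q := by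
  have := Int.ceil_le.1 hk
  rw [div_le_iff₀ (sub_pos.2 hpq)] at this
  push_cast at this
  linarith

open IntervalPolytope in
/-- For intervals with `1 < pᵢ < qᵢ` and every integer
`k ≥ φ(L) = maxᵢ ⌈pᵢ/(qᵢ−pᵢ)⌉`, the union `kP_L ∪ (k+1)P_L` of two consecutive dilations
is convex: `ConvexHull(kP_L ∪ (k+1)P_L) = kP_L ∪ (k+1)P_L`. -/
theorem stmt16 (t : ℕ) (p q : Fin t → ℝ) (h : ∀ i, 1 < p i ∧ p i < q i)
    (k : ℕ) (hk : ∀ i, ⌈p i / (q i - p i)⌉ ≤ (k : ℤ)) :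
    convexHull ℝ ((k : ℝ) • PL p q ∪ ((k : ℝ) + 1) • PL p q) =
      (k : ℝ) • PL p q ∪ ((k : ℝ) + 1) • PL p q := by
  rcases isEmpty_or_nonempty (Fin t) with _ | ⟨⟨i₀⟩⟩
  · simp [PL]
  have hp : ∀ i, 0 < p i := fun i => one_pos.trans (h i).1
  have hq : ∀ i, 0 < q i := fun i => (hp i).trans (h i).2
  have hstep : ∀ i, ((k : ℝ) + 1) * p i ≤ k * q i :=
    fun i => succ_mul_le_mul_of_ceil_le (h i).2 (hk i)
  have hk₀ : (0 : ℝ) < k := by nlinarith [hstep i₀, hp i₀, hq i₀]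
  have hPL : PL p q = slab p q 1 1 := convexHull_eq_slab hp fun i => (h i).2.le
  rw [hPL, smul_slab hk₀, smul_slab (by positivity), mul_one, mul_one,
    slab_union_slab hk₀ (by linarith) hp hq hstep, (convex_slab p q _ _).convexHull_eq]
end

section
/- Let L = {[p₁,q₁],…,[p_t,q_t]} be a set of closed real intervals with 1 < p_i < q_i for all i ∈ [t], let P_L = ConvexHull(⋃_{i∈[t]} {p_i e_i, q_i e_i}) ⊆ ℝᵗ and φ(L) = max_{i∈[t]} ⌈p_i/(q_i−p_i)⌉. Then ℕᵗ ∖ ⋃_{k∈ℕ} kP_L ⊆ ConvexHull({0} ∪ φ(L)P_L); i.e., every point of ℕᵗ lying outside the convex hull of the origin and the φ(L)-th dilation of P_L belongs to kP_L for some k ∈ ℕ. -/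
/-!
A nonnegative `y` lies in `s • P_L` as soon as `∑ yᵢ/qᵢ ≤ s ≤ ∑ yᵢ/pᵢ`: mix the vertices
`pᵢeᵢ` and `qᵢeᵢ` with weights proportional to `yᵢ/pᵢ` and `yᵢ/qᵢ`. For `x ∈ ℕᵗ` put
`A = ∑ xᵢ/qᵢ` and `B = ∑ xᵢ/pᵢ`. Since `pᵢ ≤ φ (qᵢ - pᵢ)`, termwise `B - A ≥ A / φ`.
If `A ≤ φ`, then `x ∈ A • P_L` lies on the segment from `0` to a point of `φ • P_L`.
If `A > φ`, then `B - A > 1`, so the integer `⌈A⌉` lies in `[A, B]` and `x ∈ ⌈A⌉ • P_L`.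
-/

open Pointwise

/-- `φ(L) = maxᵢ ⌈pᵢ/(qᵢ−pᵢ)⌉`. -/
noncomputable def phiN {t : ℕ} (p q : Fin t → ℝ) : ℕ :=
  Finset.univ.sup fun i => (⌈p i / (q i - p i)⌉).toNat

open Finset

lemma mem_PL_of_sum_div_le {t : ℕ} {p q y : Fin t → ℝ} (hp : ∀ i, 0 < p i) (hq : ∀ i, 0 < q i)
    (hy : ∀ i, 0 ≤ y i) (hq1 : ∑ i, y i / q i ≤ 1) (hp1 : 1 ≤ ∑ i, y i / p i) :
    y ∈ PL p q := by
  obtain ⟨c, ⟨hc0, hc1⟩, hc⟩ : ∃ c ∈ Set.Icc (0 : ℝ) 1,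
      c * ∑ i, y i / p i + (1 - c) * ∑ i, y i / q i = 1 :=
    intermediate_value_Icc zero_le_one (by fun_prop) ⟨by simpa using hq1, by simpa using hp1⟩
  let w : Fin t ⊕ Fin t → ℝ :=
    Sum.elim (fun i => c * (y i / p i)) (fun i => (1 - c) * (y i / q i))
  let z : Fin t ⊕ Fin t → Fin t → ℝ :=
    Sum.elim (fun i => Pi.single i (p i)) (fun i => Pi.single i (q i))
  have hyz : y = ∑ j, w j • z j := by
    ext j
    simp only [w, z, Finset.sum_apply, Pi.smul_apply, smul_eq_mul, Fintype.sum_sum_type,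
      Sum.elim_inl, Sum.elim_inr, Pi.single_apply, mul_ite, mul_zero, sum_ite_eq, mem_univ,
      if_true]
    rw [mul_assoc, mul_assoc, div_mul_cancel₀ _ (hp j).ne', div_mul_cancel₀ _ (hq j).ne']
    ring
  rw [hyz, PL]
  refine (convex_convexHull ℝ _).sum_mem (fun j _ => ?_) ?_ (fun j _ => subset_convexHull ℝ _ ?_)
  · rcases j with i | i
    · exact mul_nonneg hc0 (div_nonneg (hy i) (hp i).le)
    · exact mul_nonneg (sub_nonneg.2 hc1) (div_nonneg (hy i) (hq i).le)
  · simpa [w, Fintype.sum_sum_type, ← Finset.mul_sum] using hc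
  · rcases j with i | i
    · exact Set.mem_iUnion.2 ⟨i, Or.inl rfl⟩
    · exact Set.mem_iUnion.2 ⟨i, Or.inr rfl⟩

lemma mem_smul_PL_of_sum_div_le {t : ℕ} {p q y : Fin t → ℝ} {s : ℝ} (hp : ∀ i, 0 < p i)
    (hq : ∀ i, 0 < q i) (hy : ∀ i, 0 ≤ y i) (hs : 0 < s)
    (hqs : ∑ i, y i / q i ≤ s) (hps : s ≤ ∑ i, y i / p i) : y ∈ s • PL p q := by
  rw [Set.mem_smul_set_iff_inv_smul_mem₀ hs.ne']
  have hscale : ∀ r : Fin t → ℝ, ∑ i, (s⁻¹ • y) i / r i = (∑ i, y i / r i) / s := fun r => by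
    simp only [Pi.smul_apply, smul_eq_mul, Finset.sum_div]
    exact Finset.sum_congr rfl fun i _ => by ring
  refine mem_PL_of_sum_div_le hp hq (fun i => mul_nonneg (inv_nonneg.2 hs.le) (hy i)) ?_ ?_
  · rwa [hscale, div_le_one hs]
  · rwa [hscale, one_le_div hs]

lemma smul_mem_convexHull_zero_union {𝕜 E : Type*} [Field 𝕜] [LinearOrder 𝕜]
    [IsStrictOrderedRing 𝕜] [AddCommGroup E] [Module 𝕜 E] {S : Set E} {s r : 𝕜} {y : E}
    (hs : 0 ≤ s) (hsr : s ≤ r) (hy : y ∈ s • S) : y ∈ convexHull 𝕜 ({0} ∪ r • S) := by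
  obtain ⟨z, hz, rfl⟩ := Set.mem_smul_set.1 hy
  have hzero : (0 : E) ∈ convexHull 𝕜 ({0} ∪ r • S) := subset_convexHull 𝕜 _ (Or.inl rfl)
  rcases hs.eq_or_lt with rfl | hs
  · simpa using hzero
  have hr : 0 < r := hs.trans_le hsr
  have hrz : r • z ∈ convexHull 𝕜 ({0} ∪ r • S) :=
    subset_convexHull 𝕜 _ (Or.inr (Set.smul_mem_smul_set hz))
  rw [show s • z = (s / r) • r • z by rw [smul_smul, div_mul_cancel₀ _ hr.ne']]
  exact (convex_convexHull 𝕜 _).smul_mem_of_zero_mem hzero hrz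
    ⟨div_nonneg hs.le hr.le, (div_le_one hr).2 hsr⟩

lemma div_sub_le_phiN {t : ℕ} (p q : Fin t → ℝ) (i : Fin t) :
    p i / (q i - p i) ≤ phiN p q :=
  calc p i / (q i - p i) ≤ ⌈p i / (q i - p i)⌉ := Int.le_ceil _
    _ ≤ ((⌈p i / (q i - p i)⌉.toNat : ℕ) : ℤ) := by exact_mod_cast Int.self_le_toNat _
    _ ≤ phiN p q := by
      exact_mod_cast Finset.le_sup (f := fun i => (⌈p i / (q i - p i)⌉).toNat) (mem_univ i)

lemma div_div_le_div_sub_div {p q y c : ℝ} (hp : 0 < p) (hpq : p < q) (hy : 0 ≤ y)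
    (hc : p / (q - p) ≤ c) : y / q / c ≤ y / p - y / q := by
  have hq : 0 < q := hp.trans hpq
  have hinv : 1 / c ≤ (q - p) / p := by
    simpa using one_div_le_one_div_of_le (div_pos hp (sub_pos.2 hpq)) hc
  calc y / q / c = y / q * (1 / c) := by ring
    _ ≤ y / q * ((q - p) / p) := mul_le_mul_of_nonneg_left hinv (div_nonneg hy hq.le)
    _ = y / p - y / q := by field_simp

/-- For intervals with `1 < pᵢ < qᵢ`:
`ℕᵗ ∖ ⋃_{k∈ℕ} kP_L ⊆ ConvexHull({0} ∪ φ(L)P_L)`, i.e. every point of `ℕᵗ` not in any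
dilation `kP_L` lies in the convex hull of the origin and `φ(L)P_L`. -/
theorem stmt17 (t : ℕ) (p q : Fin t → ℝ) (h : ∀ i, 1 < p i ∧ p i < q i)
    (x : Fin t → ℕ) (hx : ¬ ∃ k : ℕ, (fun i => (x i : ℝ)) ∈ (k : ℝ) • PL p q) :
    (fun i => (x i : ℝ)) ∈ convexHull ℝ ({0} ∪ (phiN p q : ℝ) • PL p q) := by
  by_cases hx0 : (fun i => (x i : ℝ)) = 0
  · rw [hx0]
    exact subset_convexHull ℝ _ (Or.inl rfl)
  obtain ⟨i₀, hi₀⟩ := Function.ne_iff.1 hx0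
  have hp : ∀ i, 0 < p i := fun i => one_pos.trans (h i).1
  have hq : ∀ i, 0 < q i := fun i => (hp i).trans (h i).2
  have hy : ∀ i, (0 : ℝ) ≤ x i := fun i => Nat.cast_nonneg _
  set A := ∑ i, (x i : ℝ) / q i
  set B := ∑ i, (x i : ℝ) / p i
  have hA : 0 < A := sum_pos' (fun i _ => div_nonneg (hy i) (hq i).le)
    ⟨i₀, mem_univ _, div_pos ((hy i₀).lt_of_ne' hi₀) (hq i₀)⟩
  have hφ : (0 : ℝ) < phiN p q :=
    (div_pos (hp i₀) (sub_pos.2 (h i₀).2)).trans_le (div_sub_le_phiN p q i₀)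
  have hgap : A / phiN p q ≤ B - A := by
    rw [sum_div, ← sum_sub_distrib]
    exact sum_le_sum fun i _ =>
      div_div_le_div_sub_div (hp i) (h i).2 (hy i) (div_sub_le_phiN p q i)
  rcases le_or_gt A (phiN p q) with hAφ | hφA
  · exact smul_mem_convexHull_zero_union hA.le hAφ
      (mem_smul_PL_of_sum_div_le hp hq hy hA le_rfl (by linarith [div_nonneg hA.le hφ.le]))
  · have hBA : 1 < B - A := ((one_lt_div hφ).2 hφA).trans_le hgap
    exact absurd ⟨⌈A⌉₊, mem_smul_PL_of_sum_div_le hp hq hy (hA.trans_le (Nat.le_ceil A))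
      (Nat.le_ceil A) (by linarith [Nat.ceil_lt_add_one hA.le])⟩ hx
end
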